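/- Let M, M' be abelian groups and φ : M → M' a homomorphism with finite kernel whose cokernel has no nontrivial divisible subgroup. If M_div is uniquely divisible, then M'_div is also uniquely divisible. -/
import Mathlib


def IsDivisibleSub {A : Type*} [AddCommGroup A] (D : AddSubgroup A) : Prop :=
  ∀ n : ℕ, 0 < n → ∀ d ∈ D, ∃ d' ∈ D, n • d' = d

def maxDiv (A : Type*) [AddCommGroup A] : AddSubgroup A :=
  sSup {D : AddSubgroup A | IsDivisibleSub D}

/-- The maximal divisible subgroup is itself divisible. -/
lemma maxDiv_isDivisible (A : Type*) [AddCommGroup A] : IsDivisibleSub (maxDiv A) := by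
  -- H := elements of maxDiv A that have roots of all orders inside maxDiv A
  let H : AddSubgroup A :=
    { carrier := {x | x ∈ maxDiv A ∧ ∀ n : ℕ, 0 < n → ∃ d' ∈ maxDiv A, n • d' = x}
      zero_mem' := ⟨(maxDiv A).zero_mem, fun n _ => ⟨0, (maxDiv A).zero_mem, smul_zero n⟩⟩
      add_mem' := by
        rintro x y ⟨hx, hx'⟩ ⟨hy, hy'⟩
        refine ⟨(maxDiv A).add_mem hx hy, fun n hn => ?_⟩
        obtain ⟨a, ha, hax⟩ := hx' n hn
        obtain ⟨b, hb, hby⟩ := hy' n hn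
        exact ⟨a + b, (maxDiv A).add_mem ha hb, by rw [smul_add, hax, hby]⟩
      neg_mem' := by
        rintro x ⟨hx, hx'⟩
        refine ⟨(maxDiv A).neg_mem hx, fun n hn => ?_⟩
        obtain ⟨a, ha, hax⟩ := hx' n hn
        exact ⟨-a, (maxDiv A).neg_mem ha, by rw [smul_neg, hax]⟩ }
  have hle : maxDiv A ≤ H := by
    apply sSup_le
    intro D hD x hx
    refine ⟨le_sSup hD hx, fun n hn => ?_⟩
    obtain ⟨d', hd', hnd⟩ := hD n hn x hx
    exact ⟨d', le_sSup hD hd', hnd⟩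
  intro n hn d hd
  exact (hle hd).2 n hn

theorem stmt15 {M M' : Type*} [AddCommGroup M] [AddCommGroup M'] (φ : M →+ M')
    (hker : (φ.ker : Set M).Finite)
    (hcoker : ∀ D : AddSubgroup (M' ⧸ φ.range), IsDivisibleSub D → D = ⊥)
    (hud : ∀ x ∈ maxDiv M, ∀ n : ℕ, 0 < n → n • x = 0 → x = 0) :
    ∀ y ∈ maxDiv M', ∀ n : ℕ, 0 < n → n • y = 0 → y = 0 := by
  classical
  have hdiv' : IsDivisibleSub (maxDiv M') := maxDiv_isDivisible M'
  -- Step 1: maxDiv M' ≤ φ.range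
  have hrange : ∀ y ∈ maxDiv M', y ∈ φ.range := by
    set π := QuotientAddGroup.mk' φ.range with hπ
    have hmapdiv : IsDivisibleSub ((maxDiv M').map π) := by
      rintro n hn q ⟨d, hd, rfl⟩
      obtain ⟨d', hd', hnd⟩ := hdiv' n hn d hd
      exact ⟨π d', ⟨d', hd', rfl⟩, by rw [← map_nsmul, hnd]⟩
    have hbot := hcoker _ hmapdiv
    intro y hy
    have : π y ∈ ((maxDiv M').map π) := ⟨y, hy, rfl⟩
    rw [hbot, AddSubgroup.mem_bot] at this
    rwa [hπ, QuotientAddGroup.mk'_apply, QuotientAddGroup.eq_zero_iff] at this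
  -- A := preimage of maxDiv M'
  set A : AddSubgroup M := (maxDiv M').comap φ with hAdef
  have hA : ∀ n : ℕ, 0 < n → ∀ a ∈ A, ∃ b ∈ A, ∃ c ∈ φ.ker, a = n • b + c := by
    intro n hn a ha
    obtain ⟨y', hy', hny⟩ := hdiv' n hn (φ a) ha
    obtain ⟨b, hb⟩ := hrange y' hy'
    refine ⟨b, by simp [hAdef, AddSubgroup.mem_comap, hb, hy'], a - n • b, ?_, by abel⟩
    rw [AddMonoidHom.mem_ker, map_sub, map_nsmul, hb, hny, sub_self]
  -- the subgroups n! • A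
  let sm : ℕ → AddSubgroup M := fun n =>
    A.map (AddMonoidHom.mk' (fun x => (Nat.factorial n) • x) (fun x y => smul_add _ x y))
  have hsm_mem : ∀ n x, x ∈ sm n ↔ ∃ a ∈ A, (Nat.factorial n) • a = x := by
    intro n x
    simp [sm, AddSubgroup.mem_map]
  have hsm_le_A : ∀ n, sm n ≤ A := by
    intro n x hx
    obtain ⟨a, ha, rfl⟩ := (hsm_mem n x).1 hx
    exact A.nsmul_mem ha _
  have hsm_anti : ∀ {m n : ℕ}, n ≤ m → sm m ≤ sm n := by
    intro m n hnm x hx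
    obtain ⟨a, ha, rfl⟩ := (hsm_mem m x).1 hx
    obtain ⟨c, hc⟩ := Nat.factorial_dvd_factorial hnm
    exact (hsm_mem n _).2 ⟨c • a, A.nsmul_mem ha _, by rw [← mul_smul, ← hc]⟩
  -- the finite sets K ∩ (sm n)
  let Kn : ℕ → Set M := fun n => (φ.ker : Set M) ∩ (sm n : Set M)
  have hKnfin : ∀ n, (Kn n).Finite := fun n => hker.subset Set.inter_subset_left
  -- choose N minimizing the cardinality of Kn
  have hminex : ∃ N : ℕ, ∀ n : ℕ, (Kn N).ncard ≤ (Kn n).ncard := by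
    have hne : (Set.range fun n => (Kn n).ncard).Nonempty := ⟨(Kn 0).ncard, 0, rfl⟩
    obtain ⟨N, hN⟩ := Nat.sInf_mem hne
    refine ⟨N, fun n => ?_⟩
    calc (Kn N).ncard = _ := hN
      _ ≤ (Kn n).ncard := Nat.sInf_le ⟨n, rfl⟩
  obtain ⟨N, hN⟩ := hminex
  have hKn_stab : ∀ n, N ≤ n → Kn n = Kn N := by
    intro n hn
    exact Set.eq_of_subset_of_ncard_le
      (Set.inter_subset_inter_right _ (hsm_anti hn)) (hN n) (hKnfin N)
  -- the chain sm stabilizes at N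
  have hsm_stab : ∀ n, N ≤ n → sm n = sm N := by
    intro n hn
    refine le_antisymm (hsm_anti hn) ?_
    intro x hx
    have hxA : x ∈ A := hsm_le_A N hx
    obtain ⟨b, hb, c, hc, hxeq⟩ := hA (Nat.factorial n) (Nat.factorial_pos n) x hxA
    have hnbn : (Nat.factorial n) • b ∈ sm n := (hsm_mem n _).2 ⟨b, hb, rfl⟩
    have hcKN : c ∈ Kn N := by
      refine ⟨hc, ?_⟩
      have : c = x - (Nat.factorial n) • b := by rw [hxeq]; abel
      rw [this]
      exact (sm N).sub_mem hx (hsm_anti hn hnbn)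
    have hcKn : c ∈ Kn n := by rw [hKn_stab n hn]; exact hcKN
    rw [hxeq]
    exact (sm n).add_mem hnbn hcKn.2
  -- D₀ := sm N is divisible
  have hD0div : IsDivisibleSub (sm N) := by
    intro m hm d hd
    set n := m * (Nat.factorial N) + N with hn
    have hnN : N ≤ n := by omega
    have hdvd : m * (Nat.factorial N) ∣ (Nat.factorial n) :=
      dvd_trans (Nat.dvd_factorial (by positivity) le_rfl)
        (Nat.factorial_dvd_factorial (by omega))
    have hd' : d ∈ sm n := by rw [hsm_stab n hnN]; exact hd
    obtain ⟨a, ha, rfl⟩ := (hsm_mem n _).1 hd'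
    obtain ⟨c, hc⟩ := hdvd
    refine ⟨(Nat.factorial N) • (c • a), (hsm_mem N _).2 ⟨c • a, A.nsmul_mem ha _, rfl⟩, ?_⟩
    rw [← mul_smul, ← mul_smul, ← hc]
  have hD0le : sm N ≤ maxDiv M := le_sSup hD0div
  -- φ maps sm N onto maxDiv M'
  have hsurj : ∀ y ∈ maxDiv M', ∃ d ∈ sm N, φ d = y := by
    intro y hy
    obtain ⟨y', hy', hny⟩ := hdiv' (Nat.factorial N) (Nat.factorial_pos N) y hy
    obtain ⟨b, hb⟩ := hrange y' hy'
    have hbA : b ∈ A := by simp [hAdef, AddSubgroup.mem_comap, hb, hy']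
    exact ⟨(Nat.factorial N) • b, (hsm_mem N _).2 ⟨b, hbA, rfl⟩, by rw [map_nsmul, hb, hny]⟩
  -- conclude
  intro y hy n hn hny
  obtain ⟨d, hd, rfl⟩ := hsurj y hy
  have hndker : n • d ∈ φ.ker := by
    rw [AddMonoidHom.mem_ker, map_nsmul, hny]
  haveI : Finite φ.ker := hker
  have hkcard : Nat.card φ.ker • (n • d) = 0 := by
    have := card_nsmul_eq_zero' (G := φ.ker) (x := ⟨n • d, hndker⟩)
    exact congrArg Subtype.val this
  have hkpos : 0 < Nat.card φ.ker := Nat.card_pos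
  have hzero : d = 0 := by
    refine hud d (hD0le hd) (Nat.card φ.ker * n) (by positivity) ?_
    rw [mul_smul]; exact hkcard
  rw [hzero, map_zero]
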